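/- Fix x ∈ ℝ, an n×n Hermitian matrix M, 1 ≤ k ≤ n, and a permutation σ of {1,...,n}. Let τ = (I,J) be a random transposition where I, J are independent uniform on {1,...,n}. Define f(π) = F_{A(π)}(x), where A(π) is the k×k principal submatrix of M indexed by π(1),...,π(k). Then E[(f(σ) - f(στ))²] ≤ 8/(kn). -/

import Mathlib

/-!
Only the entries of `M` indexed by the first `k` positions matter. Right multiplication of `σ` by
the transposition `(I J)` permutes these indices when `I, J < k`, which leaves the spectrum
unchanged, and does nothing when `I, J ≥ k`. Otherwise it replaces one index, so the two `k × k`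
submatrices differ in one row and one column, i.e. by a matrix of rank at most `2`. A perturbation
of rank `r` moves the number of eigenvalues `≤ x` by at most `r`: the span of the eigenvectors with
eigenvalue `≤ x`, cut down to the kernel of the perturbation, is a subspace on which the Rayleigh
quotient of the perturbed matrix is still `≤ x`, and no such subspace is larger than that number.
Hence `f` moves by at most `2 / k`, and since at most `2 k n` of the `n²` pairs `(I, J)` are of
this kind, the expectation is at most `2 k n (2 / k)² / n² = 8 / (k n)`.
-/

open scoped Classical
open Matrix Finset

/-- Empirical spectral distribution function of a Hermitian matrix. -/
noncomputable def esd {m : Type*} [Fintype m] [DecidableEq m] {A : Matrix m m ℂ}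
    (hA : A.IsHermitian) (x : ℝ) : ℝ :=
  ((Finset.univ.filter fun i => hA.eigenvalues i ≤ x).card : ℝ) / Fintype.card m

/-- `f(p) = F_{A(p)}(x)`: ESD at `x` of the principal submatrix of `M` indexed by
`p 1, …, p k`. -/
noncomputable def fESD {n k : ℕ} (hk : k ≤ n) (M : Matrix (Fin n) (Fin n) ℂ)
    (hM : M.IsHermitian) (p : Equiv.Perm (Fin n)) (x : ℝ) : ℝ :=
  esd (hM.submatrix (fun a : Fin k => p (Fin.castLE hk a))) x

open scoped InnerProductSpace

namespace OrthonormalBasis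

variable {𝕜 E ι : Type*} [RCLike 𝕜] [NormedAddCommGroup E] [InnerProductSpace 𝕜 E] [Fintype ι]
  (b : OrthonormalBasis ι 𝕜 E)

theorem inner_eq_zero_of_mem_span_image {s : Set ι} {v : E}
    (hv : v ∈ Submodule.span 𝕜 (b '' s)) {i : ι} (hi : i ∉ s) : ⟪b i, v⟫_𝕜 = 0 := by
  have : Submodule.span 𝕜 (b '' s) ≤ LinearMap.ker (innerₛₗ 𝕜 (b i)) := by
    rw [Submodule.span_le]
    rintro _ ⟨j, hj, rfl⟩
    exact b.inner_eq_zero (ne_of_mem_of_not_mem hj hi).symm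
  exact this hv

theorem finrank_span_image (s : Finset ι) :
    Module.finrank 𝕜 (Submodule.span 𝕜 (b '' s)) = #s := by
  have hli := b.orthonormal.linearIndependent
  rw [← Finset.coe_image, finrank_span_finset_eq_card
    (by simpa using (hli.linearIndepOn (s : Set ι)).id_image),
    Finset.card_image_of_injective _ hli.injective]

variable {b} {T : E →ₗ[𝕜] E} {μ : ι → ℝ}

theorem re_inner_apply_self_eq_sum (hT : ∀ i, T (b i) = (μ i : 𝕜) • b i) (v : E) :
    RCLike.re ⟪v, T v⟫_𝕜 = ∑ i, μ i * ‖⟪b i, v⟫_𝕜‖ ^ 2 := by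
  have hTv : T v = ∑ i, (⟪b i, v⟫_𝕜 * μ i) • b i := by
    conv_lhs => rw [← b.sum_repr' v]
    simp [map_sum, hT, mul_smul]
  rw [hTv, inner_sum, map_sum]
  refine Finset.sum_congr rfl fun i _ => ?_
  rw [inner_smul_right, ← inner_conj_symm v (b i), mul_right_comm, RCLike.mul_conj]
  norm_cast
  exact mul_comm _ _

theorem re_inner_apply_self_le_of_mem_span (hT : ∀ i, T (b i) = (μ i : 𝕜) • b i) {s : Set ι}
    {x : ℝ} (hs : ∀ i ∈ s, μ i ≤ x) {v : E} (hv : v ∈ Submodule.span 𝕜 (b '' s)) :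
    RCLike.re ⟪v, T v⟫_𝕜 ≤ x * ‖v‖ ^ 2 := by
  rw [re_inner_apply_self_eq_sum hT, ← b.sum_sq_norm_inner_right, Finset.mul_sum]
  refine Finset.sum_le_sum fun i _ => ?_
  by_cases hi : i ∈ s
  · exact mul_le_mul_of_nonneg_right (hs i hi) (by positivity)
  · simp [b.inner_eq_zero_of_mem_span_image hv hi]

theorem lt_re_inner_apply_self_of_mem_span (hT : ∀ i, T (b i) = (μ i : 𝕜) • b i) {s : Set ι}
    {x : ℝ} (hs : ∀ i ∈ s, x < μ i) {v : E} (hv : v ∈ Submodule.span 𝕜 (b '' s))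
    (hv0 : v ≠ 0) : x * ‖v‖ ^ 2 < RCLike.re ⟪v, T v⟫_𝕜 := by
  rw [re_inner_apply_self_eq_sum hT, ← b.sum_sq_norm_inner_right, Finset.mul_sum]
  obtain ⟨i₀, hi₀⟩ : ∃ i, ⟪b i, v⟫_𝕜 ≠ 0 := by
    by_contra! h
    exact hv0 (by simpa [h] using (b.sum_repr' v).symm)
  have hsupp : ∀ i, ⟪b i, v⟫_𝕜 ≠ 0 → x < μ i := fun i hi =>
    hs i (not_not.1 fun his => hi (b.inner_eq_zero_of_mem_span_image hv his))
  refine Finset.sum_lt_sum (fun i _ => ?_) ⟨i₀, Finset.mem_univ _, ?_⟩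
  · by_cases hi : ⟪b i, v⟫_𝕜 = 0
    · simp [hi]
    · exact mul_le_mul_of_nonneg_right (hsupp i hi).le (by positivity)
  · exact mul_lt_mul_of_pos_right (hsupp i₀ hi₀) (by positivity)

end OrthonormalBasis

namespace LinearMap

variable {𝕜 E ι κ : Type*} [RCLike 𝕜] [NormedAddCommGroup E] [InnerProductSpace 𝕜 E]
  [Fintype ι] [Fintype κ] {b : OrthonormalBasis ι 𝕜 E} {T : E →ₗ[𝕜] E} {μ : ι → ℝ}

theorem finrank_le_card_eigenvalues_le (hT : ∀ i, T (b i) = (μ i : 𝕜) • b i) {x : ℝ}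
    (W : Submodule 𝕜 E) (hW : ∀ v ∈ W, RCLike.re ⟪v, T v⟫_𝕜 ≤ x * ‖v‖ ^ 2) :
    Module.finrank 𝕜 W ≤ #{i | μ i ≤ x} := by
  have := Module.Finite.of_basis b.toBasis
  set G := Submodule.span 𝕜 (b '' ↑({i | x < μ i} : Finset ι))
  have hdisj : W ⊓ G = ⊥ := by
    refine (Submodule.eq_bot_iff _).2 fun v hv => by_contra fun hv0 => ?_
    exact (hW v hv.1).not_gt
      (OrthonormalBasis.lt_re_inner_apply_self_of_mem_span hT (by simp) hv.2 hv0)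
  have hsup := Submodule.finrank_sup_add_finrank_inf_eq W G
  have hE : Module.finrank 𝕜 ↥(W ⊔ G) ≤ Fintype.card ι :=
    (Submodule.finrank_le _).trans (Module.finrank_eq_card_basis b.toBasis).le
  have hcard : #{i | x < μ i} + #{i | μ i ≤ x} = Fintype.card ι := by
    simpa [not_lt] using Finset.card_filter_add_card_filter_not (s := univ) (fun i => x < μ i)
  rw [hdisj, finrank_bot, b.finrank_span_image] at hsup
  omega

theorem card_eigenvalues_le_le_add_finrank_range_sub (hT : ∀ i, T (b i) = (μ i : 𝕜) • b i)
    {c : OrthonormalBasis κ 𝕜 E} {S : E →ₗ[𝕜] E} {ν : κ → ℝ}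
    (hS : ∀ j, S (c j) = (ν j : 𝕜) • c j) (x : ℝ) :
    #{i | μ i ≤ x} ≤ #{j | ν j ≤ x} + Module.finrank 𝕜 (range (T - S)) := by
  have := Module.Finite.of_basis b.toBasis
  set L := Submodule.span 𝕜 (b '' ↑({i | μ i ≤ x} : Finset ι))
  have hW : ∀ v ∈ L ⊓ ker (T - S), RCLike.re ⟪v, S v⟫_𝕜 ≤ x * ‖v‖ ^ 2 := by
    rintro v ⟨hvL, hvK⟩
    have hTS : S v = T v := (sub_eq_zero.1 hvK).symm
    rw [hTS]
    exact OrthonormalBasis.re_inner_apply_self_le_of_mem_span hT (by simp) hvL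
  have hle := finrank_le_card_eigenvalues_le hS _ hW
  have hsup := Submodule.finrank_sup_add_finrank_inf_eq L (ker (T - S))
  have hE : Module.finrank 𝕜 ↥(L ⊔ ker (T - S)) ≤ Module.finrank 𝕜 E := Submodule.finrank_le _
  have hrk := finrank_range_add_finrank_ker (T - S)
  rw [OrthonormalBasis.finrank_span_image] at hsup
  omega

end LinearMap

namespace Matrix

theorem rank_add_le {K m n : Type*} [Field K] [Fintype n] (A B : Matrix m n K) :
    (A + B).rank ≤ A.rank + B.rank := by
  rw [rank, rank, rank, mulVecLin_add]
  exact (Submodule.finrank_mono (LinearMap.range_add_le _ _)).trans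
    (Submodule.finrank_add_le_finrank_add_finrank _ _)

theorem rank_le_two_of_eq_zero_off_row_col {K m : Type*} [Field K] [Fintype m] [DecidableEq m]
    {D : Matrix m m K} (i : m) (hD : ∀ a b, a ≠ i → b ≠ i → D a b = 0) : D.rank ≤ 2 := by
  set R : Matrix m m K := of fun a b => if a = i then D a b else 0
  set C : Matrix m m K := of fun a b => if a = i then 0 else D a b
  have hRC : D = R + C := by
    ext a b
    by_cases ha : a = i <;> simp [R, C, ha]
  have hR : R.rank ≤ 1 := by
    refine (R.rank_le_card_of_support_subset {i} fun a ha => ?_).trans (card_singleton i).le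
    by_contra hai
    exact ha (funext fun b => by simp [R, row, Finset.mem_singleton.not.1 hai])
  have hC : C.rank ≤ 1 := by
    rw [← rank_transpose]
    refine (Cᵀ.rank_le_card_of_support_subset {i} fun b hb => ?_).trans (card_singleton i).le
    by_contra hbi
    refine hb (funext fun a => ?_)
    by_cases ha : a = i
    · simp [C, row, ha]
    · simp [C, row, ha, hD a b ha (Finset.mem_singleton.not.1 hbi)]
  rw [hRC]
  exact (rank_add_le R C).trans (by omega)

namespace IsHermitian

variable {𝕜 m : Type*} [RCLike 𝕜] [Fintype m] [DecidableEq m] {A B : Matrix m m 𝕜}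

theorem toEuclideanLin_eigenvectorBasis (hA : A.IsHermitian) (i : m) :
    toEuclideanLin A (hA.eigenvectorBasis i) = (hA.eigenvalues i : 𝕜) • hA.eigenvectorBasis i := by
  rw [toLpLin_apply, hA.mulVec_eigenvectorBasis, RCLike.real_smul_eq_coe_smul (K := 𝕜)]
  rfl

theorem card_eigenvalues_le_le_add_rank_sub (hA : A.IsHermitian) (hB : B.IsHermitian) (x : ℝ) :
    #{i | hA.eigenvalues i ≤ x} ≤ #{i | hB.eigenvalues i ≤ x} + (A - B).rank := by
  have hrank : (A - B).rank = Module.finrank 𝕜 (LinearMap.range (toEuclideanLin (A - B))) := by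
    rw [toEuclideanLin_eq_toLin_orthonormal, rank_eq_finrank_range_toLin _
      (EuclideanSpace.basisFun m 𝕜).toBasis (EuclideanSpace.basisFun m 𝕜).toBasis]
  rw [hrank, map_sub]
  exact LinearMap.card_eigenvalues_le_le_add_finrank_range_sub hA.toEuclideanLin_eigenvectorBasis
    hB.toEuclideanLin_eigenvectorBasis x

theorem eigenvalues_submatrix_equiv (hA : A.IsHermitian) (e : Equiv.Perm m) :
    (hA.submatrix e).eigenvalues = hA.eigenvalues := by
  rw [eigenvalues_eq_eigenvalues_iff, ← charpoly_reindex e.symm A]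
  simp [reindex_apply]

end IsHermitian

end Matrix

theorem esd_submatrix_comp_equiv {m κ : Type*} [Fintype κ] [DecidableEq κ] {M : Matrix m m ℂ}
    (hM : M.IsHermitian) (f : κ → m) (e : Equiv.Perm κ) (x : ℝ) :
    esd (hM.submatrix (f ∘ e)) x = esd (hM.submatrix f) x := by
  change esd ((hM.submatrix f).submatrix e) x = _
  unfold esd
  rw [(hM.submatrix f).eigenvalues_submatrix_equiv e]

theorem abs_esd_sub_esd_le_of_eq_off_row_col {m : Type*} [Fintype m] [DecidableEq m]
    {A B : Matrix m m ℂ} (hA : A.IsHermitian) (hB : B.IsHermitian) (x : ℝ) (i : m)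
    (hAB : ∀ a b, a ≠ i → b ≠ i → A a b = B a b) :
    |esd hA x - esd hB x| ≤ 2 / Fintype.card m := by
  have hrank : ∀ {A B : Matrix m m ℂ}, (∀ a b, a ≠ i → b ≠ i → A a b = B a b) →
      (A - B).rank ≤ 2 := fun h =>
    rank_le_two_of_eq_zero_off_row_col i fun a b ha hb => sub_eq_zero.2 (h a b ha hb)
  have hAB' : (#{i | hA.eigenvalues i ≤ x} : ℝ) ≤ #{i | hB.eigenvalues i ≤ x} + 2 := by
    exact_mod_cast (hA.card_eigenvalues_le_le_add_rank_sub hB x).trans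
      (Nat.add_le_add_left (hrank hAB) _)
  have hBA' : (#{i | hB.eigenvalues i ≤ x} : ℝ) ≤ #{i | hA.eigenvalues i ≤ x} + 2 := by
    exact_mod_cast (hB.card_eigenvalues_le_le_add_rank_sub hA x).trans
      (Nat.add_le_add_left (hrank fun a b ha hb => (hAB a b ha hb).symm) _)
  rw [esd, esd, ← sub_div, abs_div, Nat.abs_cast]
  gcongr
  exact abs_sub_le_iff.2 ⟨by linarith, by linarith⟩

section RandomTransposition

variable {n k : ℕ} (hk : k ≤ n) (M : Matrix (Fin n) (Fin n) ℂ) (hM : M.IsHermitian) (x : ℝ)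
  (σ : Equiv.Perm (Fin n)) {I J : Fin n}

theorem fESD_mul_swap_of_lt_of_lt (hI : (I : ℕ) < k) (hJ : (J : ℕ) < k) :
    fESD hk M hM (σ * Equiv.swap I J) x = fESD hk M hM σ x := by
  have hswap : (fun a => (σ * Equiv.swap I J) (Fin.castLE hk a)) =
      (fun a => σ (Fin.castLE hk a)) ∘ Equiv.swap ⟨I, hI⟩ ⟨J, hJ⟩ :=
    congrArg (σ ∘ ·) ((Fin.castLE_injective hk).swap_comp ⟨I, hI⟩ ⟨J, hJ⟩)
  unfold fESD
  simp only [hswap]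
  exact esd_submatrix_comp_equiv hM _ _ x

theorem fESD_mul_swap_of_le_of_le (hI : k ≤ (I : ℕ)) (hJ : k ≤ (J : ℕ)) :
    fESD hk M hM (σ * Equiv.swap I J) x = fESD hk M hM σ x := by
  have hfix (a : Fin k) : Equiv.swap I J (Fin.castLE hk a) = Fin.castLE hk a :=
    Equiv.swap_apply_of_ne_of_ne (Fin.ne_of_val_ne (by simp; omega))
      (Fin.ne_of_val_ne (by simp; omega))
  simp only [fESD, Equiv.Perm.mul_apply, hfix]

theorem abs_fESD_sub_fESD_mul_swap_le (hI : (I : ℕ) < k) (hJ : k ≤ (J : ℕ)) :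
    |fESD hk M hM σ x - fESD hk M hM (σ * Equiv.swap I J) x| ≤ 2 / k := by
  have hfix (a : Fin k) (ha : a ≠ ⟨I, hI⟩) :
      Equiv.swap I J (Fin.castLE hk a) = Fin.castLE hk a :=
    Equiv.swap_apply_of_ne_of_ne (fun h => ha (Fin.ext (by simpa [Fin.ext_iff] using h)))
      (Fin.ne_of_val_ne (by simp; omega))
  simpa only [fESD, Fintype.card_fin] using abs_esd_sub_esd_le_of_eq_off_row_col
    (hM.submatrix fun a => σ (Fin.castLE hk a))
    (hM.submatrix fun a => (σ * Equiv.swap I J) (Fin.castLE hk a)) x ⟨I, hI⟩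
    fun a b ha hb => by simp [hfix a ha, hfix b hb]

-- The right side dominates `4 / k²` times the indicator that exactly one of `I`, `J` is `< k`.
theorem sq_fESD_sub_fESD_mul_swap_le :
    (fESD hk M hM σ x - fESD hk M hM (σ * Equiv.swap I J) x) ^ 2 ≤
      (if (I : ℕ) < k then 4 / (k : ℝ) ^ 2 else 0) +
        (if (J : ℕ) < k then 4 / (k : ℝ) ^ 2 else 0) := by
  have hmixed {I J : Fin n} (hI : (I : ℕ) < k) (hJ : k ≤ (J : ℕ)) :
      (fESD hk M hM σ x - fESD hk M hM (σ * Equiv.swap I J) x) ^ 2 ≤ 4 / (k : ℝ) ^ 2 := by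
    rw [← sq_abs]
    calc _ ≤ (2 / k : ℝ) ^ 2 := by
          gcongr; exact abs_fESD_sub_fESD_mul_swap_le hk M hM x σ hI hJ
      _ = 4 / k ^ 2 := by ring
  rcases lt_or_ge (I : ℕ) k with hI | hI <;> rcases lt_or_ge (J : ℕ) k with hJ | hJ
  · rw [fESD_mul_swap_of_lt_of_lt hk M hM x σ hI hJ, sub_self, zero_pow two_ne_zero, if_pos hI,
      if_pos hJ]
    positivity
  · simpa [hI, hJ.not_gt] using hmixed hI hJ
  · simpa [hI.not_gt, hJ, Equiv.swap_comm I J] using hmixed hJ hI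
  · simp [fESD_mul_swap_of_le_of_le hk M hM x σ hI hJ, hI.not_gt, hJ.not_gt]

end RandomTransposition

/-- For a random transposition `τ = (I, J)` with `I, J` independent uniform on `{1,…,n}`,
`E[(f(σ) - f(στ))²] ≤ 8 / (k n)`. -/
theorem expectation_sq_diff_le {n k : ℕ} (hk0 : 0 < k) (hk : k ≤ n)
    (M : Matrix (Fin n) (Fin n) ℂ) (hM : M.IsHermitian) (x : ℝ) (σ : Equiv.Perm (Fin n)) :
    (∑ I : Fin n, ∑ J : Fin n,
        (fESD hk M hM σ x - fESD hk M hM (σ * Equiv.swap I J) x) ^ 2) / (n : ℝ) ^ 2 ≤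
      8 / (k * n) := by
  have hk' : (k : ℝ) ≠ 0 := by positivity
  have hn : (n : ℝ) ≠ 0 := by norm_cast; omega
  set c : Fin n → ℝ := fun I => if (I : ℕ) < k then 4 / (k : ℝ) ^ 2 else 0
  have hc : ∑ I, c I = 4 / k := by
    simp only [c, Finset.sum_ite, Finset.sum_const, smul_zero, add_zero, Fin.card_filter_val_lt,
      min_eq_right hk, nsmul_eq_mul]
    field_simp
  calc _ ≤ (∑ I : Fin n, ∑ J : Fin n, (c I + c J)) / (n : ℝ) ^ 2 := by
        gcongr with I _ J _; exact sq_fESD_sub_fESD_mul_swap_le hk M hM x σ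
    _ = 8 / (k * n) := by
        simp only [Finset.sum_add_distrib, Finset.sum_const, Finset.card_univ, Fintype.card_fin,
          nsmul_eq_mul, ← Finset.mul_sum, hc]
        field_simp
        ring
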